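/- arXiv:1803.05097 — 3 statements merged into one kernel-verified Lean document; each statement's English description precedes it below -/
import Mathlib

section
/- Let f : ℕ → ℕ be the Fibonacci sequence with f 0 = 1 and f 1 = 1. Define sequences wA, hA, wB, hB : ℕ → ℕ (indexed from 1) by wA 1 = 1, hA 1 = 1, wB 1 = 1, hB 1 = 2, and the recursions wA (n+1) = wB n + wA n, hA (n+1) = hB n + hA n, wB (n+1) = wB n + wA (n+1), hB (n+1) = hB n + hA (n+1). Then for all n ≥ 1: wA n = f (2n-2), hA n = f (2n-1), wB n = f (2n-1), and hB n = f (2n). -/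
/-! The four sequences interleave into a single sequence obeying the Fibonacci recursion,
`wA, hA | wB, hB` at stage `k + 1` occupying the positions `2k, 2k+1 | 2k+1, 2k+2`: each
recursion adds the two preceding terms of that interleaving. Induction on `k` then shows they
agree with `f`, since they agree at `k = 0`. -/

theorem walk_eq_of_fib_recursion {f wA hA wB hB : ℕ → ℕ}
    (hf : ∀ n, f (n + 2) = f (n + 1) + f n)
    (hwA : ∀ k, wA (k + 2) = wB (k + 1) + wA (k + 1))
    (hhA : ∀ k, hA (k + 2) = hB (k + 1) + hA (k + 1))
    (hwB : ∀ k, wB (k + 2) = wB (k + 1) + wA (k + 2))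
    (hhB : ∀ k, hB (k + 2) = hB (k + 1) + hA (k + 2))
    (h₀ : wA 1 = f 0 ∧ hA 1 = f 1 ∧ wB 1 = f 1 ∧ hB 1 = f 2) (k : ℕ) :
    wA (k + 1) = f (2 * k) ∧ hA (k + 1) = f (2 * k + 1) ∧
      wB (k + 1) = f (2 * k + 1) ∧ hB (k + 1) = f (2 * k + 2) := by
  induction k with
  | zero => exact h₀
  | succ k ih =>
    obtain ⟨ihwA, ihhA, ihwB, ihhB⟩ := ih
    have hwA' : wA (k + 2) = f (2 * k + 2) := by rw [hwA, ihwA, ihwB, hf]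
    have hhA' : hA (k + 2) = f (2 * k + 3) := by rw [hhA, ihhA, ihhB, hf (2 * k + 1)]
    have hwB' : wB (k + 2) = f (2 * k + 3) := by rw [hwB, ihwB, hwA', hf (2 * k + 1), add_comm]
    have hhB' : hB (k + 2) = f (2 * k + 4) := by rw [hhB, ihhB, hhA', hf (2 * k + 2), add_comm]
    exact ⟨hwA', hhA', hwB', hhB'⟩

theorem fib_walk_widths_heights
    (f wA hA wB hB : ℕ → ℕ)
    (hf0 : f 0 = 1) (hf1 : f 1 = 1)
    (hf : ∀ n, f (n + 2) = f (n + 1) + f n)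
    (hwA1 : wA 1 = 1) (hhA1 : hA 1 = 1) (hwB1 : wB 1 = 1) (hhB1 : hB 1 = 2)
    (hwA : ∀ n ≥ 1, wA (n + 1) = wB n + wA n)
    (hhA : ∀ n ≥ 1, hA (n + 1) = hB n + hA n)
    (hwB : ∀ n ≥ 1, wB (n + 1) = wB n + wA (n + 1))
    (hhB : ∀ n ≥ 1, hB (n + 1) = hB n + hA (n + 1)) :
    ∀ n ≥ 1, wA n = f (2 * n - 2) ∧ hA n = f (2 * n - 1) ∧
      wB n = f (2 * n - 1) ∧ hB n = f (2 * n) := by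
  rintro n hn
  obtain ⟨k, rfl⟩ : ∃ k, n = k + 1 := ⟨n - 1, by omega⟩
  have h₀ : wA 1 = f 0 ∧ hA 1 = f 1 ∧ wB 1 = f 1 ∧ hB 1 = f 2 := by
    simp only [hf 0, hf0, hf1, hwA1, hhA1, hwB1, hhB1, and_self]
  have key := walk_eq_of_fib_recursion hf (fun k => hwA (k + 1) k.succ_pos)
    (fun k => hhA (k + 1) k.succ_pos) (fun k => hwB (k + 1) k.succ_pos)
    (fun k => hhB (k + 1) k.succ_pos) h₀ k
  rwa [show 2 * (k + 1) - 2 = 2 * k by omega, show 2 * (k + 1) - 1 = 2 * k + 1 by omega,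
    show 2 * (k + 1) = 2 * k + 2 by omega]
end

section
/- Let f be the Fibonacci sequence with f 0 = f 1 = 1, and for n ≥ 1 define the list of 2n+2 vectors P n = [(1,0), (f 0, f 1), (f 2, f 3), …, (f (2n-2), f (2n-1)), (f (2n-1), f (2n)), (f (2n-3), f (2n-1)), …, (f 1, f 2), (0,1)] in ℤ². Then the sequence of slopes of these vectors (treating (1,0) as slope 0 and (0,1) as slope +∞) is strictly increasing. -/
/-!
Write `v α = (f α, f (α + 1))`. The interior edges of `P n` are `v 0, v 2, …, v (2n-2)` followed by
`v (2n-1), v (2n-3), …, v 1`. By d'Ocagne's identity the cross product of `v α` with `v (α + d + 1)`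
is `(-1)^α f d`, so `v α` precedes `v β` in slope when `α < β` is even or `β < α` is odd, which is
exactly the order of the list: even indices increasing, then odd ones decreasing. The two end vectors `(1,0)` and `(0,1)` are handled
by positivity of `f`.
-/

/-- The cross product `v × w`; it is positive iff the slope of `w` exceeds that of `v` (for `v, w` in
the closed first quadrant, not both on the same axis). -/
def cross (v w : ℤ × ℤ) : ℤ := v.1 * w.2 - w.1 * v.2

section Recurrence

variable {R : Type*} [CommRing R] {u : ℕ → R}

theorem dOcagne_identity (hu : ∀ m, u (m + 2) = u (m + 1) + u m) (a d : ℕ) :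
    u a * u (a + d + 2) - u (a + 1) * u (a + d + 1) =
      (-1) ^ a * (u 0 * u (d + 2) - u 1 * u (d + 1)) := by
  induction a with
  | zero => simp
  | succ a ih =>
    rw [show a + 1 + d + 2 = a + d + 1 + 2 by omega, show a + 1 + d + 1 = a + d + 2 by omega,
      hu (a + d + 1), hu a, pow_succ]
    linear_combination -ih

end Recurrence

def fibVec (f : ℕ → ℕ) (α : ℕ) : ℤ × ℤ := (f α, f (α + 1))

section Fibonacci

variable {f : ℕ → ℕ} (hf0 : f 0 = 1) (hf1 : f 1 = 1) (hf : ∀ m, f (m + 2) = f (m + 1) + f m)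
include hf0 hf1 hf

theorem pos_of_fib_rec : ∀ m, 0 < f m
  | 0 => by omega
  | 1 => by omega
  | m + 2 => by rw [hf]; have := pos_of_fib_rec (m + 1); omega

theorem cross_fibVec_add_succ (α d : ℕ) :
    cross (fibVec f α) (fibVec f (α + d + 1)) = (-1) ^ α * f d := by
  have hu : ∀ m, (f (m + 2) : ℤ) = f (m + 1) + f m := fun m => by push_cast [hf]; rfl
  have h := dOcagne_identity (u := fun m => (f m : ℤ)) hu α d
  simp only [hf0, hf1, hu d, Nat.cast_one, one_mul] at h
  simp only [cross, fibVec, add_assoc] at h ⊢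
  linear_combination h

theorem cross_fibVec_pos {α β : ℕ} (h : (α < β ∧ Even α) ∨ (β < α ∧ Odd β)) :
    0 < cross (fibVec f α) (fibVec f β) := by
  have hpos : ∀ d, (0 : ℤ) < f d := fun d => Nat.cast_pos.mpr (pos_of_fib_rec hf0 hf1 hf d)
  rcases h with ⟨hlt, hα⟩ | ⟨hlt, hβ⟩
  · obtain ⟨d, rfl⟩ : ∃ d, β = α + d + 1 := ⟨β - α - 1, by omega⟩
    rw [cross_fibVec_add_succ hf0 hf1 hf, hα.neg_one_pow, one_mul]
    exact hpos d
  · obtain ⟨d, rfl⟩ : ∃ d, α = β + d + 1 := ⟨α - β - 1, by omega⟩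
    have h := cross_fibVec_add_succ hf0 hf1 hf β d
    rw [hβ.neg_one_pow] at h
    have hpos := hpos d
    simp only [cross] at h ⊢
    linarith

end Fibonacci

/-- The index `α` with `P n k = fibVec f α`, for `2 ≤ k ≤ 2n + 1`. -/
def edgeIndex (n k : ℕ) : ℕ := if k ≤ n + 1 then 2 * (k - 2) else 2 * (2 * n + 1 - k) + 1

theorem edgeIndex_order {n i j : ℕ} (hi : 2 ≤ i) (hij : i < j) (hj : j ≤ 2 * n + 1) :
    (edgeIndex n i < edgeIndex n j ∧ Even (edgeIndex n i)) ∨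
      (edgeIndex n j < edgeIndex n i ∧ Odd (edgeIndex n j)) := by
  simp only [edgeIndex, Nat.even_iff, Nat.odd_iff]
  split_ifs <;> omega

theorem slopes_of_P_strictly_increasing_general
    (n : ℕ)
    (f : ℕ → ℕ) (hf0 : f 0 = 1) (hf1 : f 1 = 1)
    (hf : ∀ m, f (m + 2) = f (m + 1) + f m)
    (P : ℕ → ℤ × ℤ)
    (hP1 : P 1 = (1, 0))
    (hPA : ∀ k, 2 ≤ k → k ≤ n + 1 →
      P k = ((f (2 * (k - 1) - 2) : ℤ), (f (2 * (k - 1) - 1) : ℤ)))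
    (hPB : ∀ k, n + 2 ≤ k → k ≤ 2 * n + 1 →
      P k = ((f (2 * (2 * n + 2 - k) - 1) : ℤ), (f (2 * (2 * n + 2 - k)) : ℤ)))
    (hPlast : P (2 * n + 2) = (0, 1)) :
    ∀ i j, 1 ≤ i → i < j → j ≤ 2 * n + 2 →
      (P i).1 * (P j).2 - (P j).1 * (P i).2 > 0 := by
  have hP : ∀ k, 2 ≤ k → k ≤ 2 * n + 1 → P k = fibVec f (edgeIndex n k) := by
    intro k hk2 hk
    unfold edgeIndex fibVec
    split_ifs with h
    · rw [hPA k hk2 h, show 2 * (k - 1) - 2 = 2 * (k - 2) by omega,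
        show 2 * (k - 1) - 1 = 2 * (k - 2) + 1 by omega]
    · rw [hPB k (by omega) hk, show 2 * (2 * n + 2 - k) - 1 = 2 * (2 * n + 1 - k) + 1 by omega,
        show 2 * (2 * n + 2 - k) = 2 * (2 * n + 1 - k) + 1 + 1 by omega]
  have hpos : ∀ d, (0 : ℤ) < f d := fun d => Nat.cast_pos.mpr (pos_of_fib_rec hf0 hf1 hf d)
  intro i j hi hij hj
  change 0 < cross (P i) (P j)
  obtain rfl | hi := hi.eq_or_lt
  · obtain rfl | hj := hj.eq_or_lt
    · simp [cross, hP1, hPlast]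
    · simpa [cross, hP1, hP j (by omega) (by omega), fibVec] using hpos _
  · obtain rfl | hj := hj.eq_or_lt
    · simpa [cross, hPlast, hP i hi (by omega), fibVec] using hpos _
    · rw [hP i hi (by omega), hP j (by omega) (by omega)]
      exact cross_fibVec_pos hf0 hf1 hf (edgeIndex_order hi hij (by omega))

/-- The edge-vector list `P n` of the paper, as a function on indices `1 ≤ k ≤ 2n+2`:
`P 1 = (1,0)`; for `2 ≤ k ≤ n+1`, `P k = (f (2(k-1)-2), f (2(k-1)-1))` (the vector of `A (k-1)`);
for `n+2 ≤ k ≤ 2n+1`, `P k = (f (2(2n+2-k)-1), f (2(2n+2-k)))` (the vector of `B (2n+2-k)`);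
and `P (2n+2) = (0,1)`.  The slopes are strictly increasing, i.e. all cross products of an
earlier vector with a later one are positive (this also handles `(1,0)` as slope `0` and
`(0,1)` as slope `+∞`). -/
theorem slopes_of_P_strictly_increasing
    (n : ℕ) (hn : 1 ≤ n)
    (f : ℕ → ℕ) (hf0 : f 0 = 1) (hf1 : f 1 = 1)
    (hf : ∀ m, f (m + 2) = f (m + 1) + f m)
    (P : ℕ → ℤ × ℤ)
    (hP1 : P 1 = (1, 0))
    (hPA : ∀ k, 2 ≤ k → k ≤ n + 1 →
      P k = ((f (2 * (k - 1) - 2) : ℤ), (f (2 * (k - 1) - 1) : ℤ)))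
    (hPB : ∀ k, n + 2 ≤ k → k ≤ 2 * n + 1 →
      P k = ((f (2 * (2 * n + 2 - k) - 1) : ℤ), (f (2 * (2 * n + 2 - k)) : ℤ)))
    (hPlast : P (2 * n + 2) = (0, 1)) :
    ∀ i j, 1 ≤ i → i < j → j ≤ 2 * n + 2 →
      (P i).1 * (P j).2 - (P j).1 * (P i).2 > 0 :=
  slopes_of_P_strictly_increasing_general n f hf0 hf1 hf P hP1 hPA hPB hPlast
end

section
/- Let A, B : ℕ → F be the sequences in the free group F on x, y, w, z defined by A 1 = y w z⁻¹ x, B 1 = y² w z⁻¹ x, A(n+1) = B n · A n, B(n+1) = B n · B n · A n. Then for every n ≥ 1, the images of A n and B n under the homomorphism killing w and z are positive words in x and y (elements of the submonoid generated by x and y), and the word length of the image of A n is f(2n−2) + f(2n−1) and of B n is f(2n−1) + f(2n), where f is the Fibonacci sequence with f 0 = f 1 = 1. -/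
/-!
Killing `w` and `z` turns `A 1, B 1` into the positive words `y x, y² x`, and the recursion
keeps the images positive. Positive words are reduced, so word length is additive on them and
the lengths satisfy `|A (n+1)| = |B n| + |A n|`, `|B (n+1)| = 2 |B n| + |A n|`. Starting from
`|A 1| = f 2`, `|B 1| = f 3` this gives `|A n| = f (2n)` and `|B n| = f (2n+1)`, which are the
stated sums by the Fibonacci recursion.
-/

namespace FreeMonoid

variable {α : Type*}

/-- Its image is the set of positive words. -/
abbrev toFreeGroup : FreeMonoid α →* FreeGroup α := lift FreeGroup.of

theorem toFreeGroup_eq_mk (u : FreeMonoid α) :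
    toFreeGroup u = FreeGroup.mk (u.toList.map (·, true)) := by
  induction u with
  | one => rfl
  | of x => rfl
  | mul u v hu hv => simp [hu, hv, FreeGroup.mul_mk]

theorem toFreeGroup_mem_closure (u : FreeMonoid α) :
    toFreeGroup u ∈ Submonoid.closure (Set.range (FreeGroup.of : α → FreeGroup α)) :=
  mrange_lift (M := FreeGroup α) FreeGroup.of ▸ ⟨u, rfl⟩

theorem length_toWord_toFreeGroup [DecidableEq α] (u : FreeMonoid α) :
    (toFreeGroup u).toWord.length = u.length := by
  have hred : FreeGroup.IsReduced (u.toList.map (·, true)) :=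
    (List.isChain_map _).2 (List.isChain_iff_getElem.2 fun _ _ _ => rfl)
  rw [toFreeGroup_eq_mk, FreeGroup.toWord_mk, hred.reduce_eq, List.length_map, length]

end FreeMonoid

open FreeMonoid

theorem FreeGroup.range_of_fin_two :
    Set.range (FreeGroup.of : Fin 2 → FreeGroup (Fin 2)) = {FreeGroup.of 0, FreeGroup.of 1} := by
  simp [Set.range, Fin.exists_fin_two, Set.ext_iff, eq_comm]

theorem exists_positive_images_of_recurrence {G α : Type*} [Monoid G] (π : G →* FreeGroup α)
    (f : ℕ → ℕ) (hf : ∀ m, f (m + 2) = f (m + 1) + f m) (A B : ℕ → G)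
    (hA : ∀ n ≥ 1, A (n + 1) = B n * A n) (hB : ∀ n ≥ 1, B (n + 1) = B n * B n * A n)
    (a₁ b₁ : FreeMonoid α)
    (ha₁ : π (A 1) = toFreeGroup a₁) (hb₁ : π (B 1) = toFreeGroup b₁)
    (ha₁_length : a₁.length = f 2) (hb₁_length : b₁.length = f 3) :
    ∀ n ≥ 1, ∃ a b : FreeMonoid α, π (A n) = toFreeGroup a ∧ π (B n) = toFreeGroup b ∧
      a.length = f (2 * n) ∧ b.length = f (2 * n + 1) := by
  intro n hn
  induction n, hn using Nat.le_induction with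
  | base => exact ⟨a₁, b₁, ha₁, hb₁, ha₁_length, hb₁_length⟩
  | succ n hn ih =>
    obtain ⟨a, b, ha, hb, ha_length, hb_length⟩ := ih
    refine ⟨b * a, b * b * a, ?_, ?_, ?_, ?_⟩
    · simp [hA n hn, ha, hb]
    · simp [hB n hn, ha, hb]
    · rw [length_mul, ha_length, hb_length, show 2 * (n + 1) = 2 * n + 2 by ring, hf]
    · rw [length_mul, length_mul, ha_length, hb_length,
        show 2 * (n + 1) + 1 = 2 * n + 1 + 2 by ring, hf, hf]
      ring

theorem A_B_images_positive_with_fib_lengths_general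
    (f : ℕ → ℕ) (hf0 : f 0 = 1) (hf1 : f 1 = 1)
    (hf : ∀ m, f (m + 2) = f (m + 1) + f m)
    (x y w z : FreeGroup (Fin 4))
    (A B : ℕ → FreeGroup (Fin 4))
    (hA1 : A 1 = y * w * z⁻¹ * x)
    (hB1 : B 1 = y ^ 2 * w * z⁻¹ * x)
    (hA : ∀ n ≥ 1, A (n + 1) = B n * A n)
    (hB : ∀ n ≥ 1, B (n + 1) = B n * B n * A n)
    (π : FreeGroup (Fin 4) →* FreeGroup (Fin 2))
    (hπx : π x = FreeGroup.of 0) (hπy : π y = FreeGroup.of 1)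
    (hπw : π w = 1) (hπz : π z = 1) :
    ∀ n ≥ 1,
      π (A n) ∈ Submonoid.closure ({FreeGroup.of 0, FreeGroup.of 1} : Set (FreeGroup (Fin 2))) ∧
      π (B n) ∈ Submonoid.closure ({FreeGroup.of 0, FreeGroup.of 1} : Set (FreeGroup (Fin 2))) ∧
      (FreeGroup.toWord (π (A n))).length = f (2 * n - 2) + f (2 * n - 1) ∧
      (FreeGroup.toWord (π (B n))).length = f (2 * n - 1) + f (2 * n) := by
  intro n hn
  obtain ⟨a, b, ha, hb, ha_length, hb_length⟩ :=
    exists_positive_images_of_recurrence π f hf A B hA hB (of 1 * of 0) (of 1 * of 1 * of 0)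
      (by simp [hA1, hπx, hπy, hπw, hπz]) (by simp [hB1, hπx, hπy, hπw, hπz, sq])
      (by simp [hf, hf0, hf1]) (by simp [hf, hf0, hf1]) n hn
  obtain ⟨k, hk⟩ : ∃ k, 2 * n = k + 2 := ⟨2 * n - 2, by omega⟩
  rw [← FreeGroup.range_of_fin_two, ha, hb, length_toWord_toFreeGroup,
    length_toWord_toFreeGroup, ha_length, hb_length, hk]
  refine ⟨toFreeGroup_mem_closure a, toFreeGroup_mem_closure b, ?_, ?_⟩
  · simp [hf k, add_comm]
  · rw [show k + 2 - 1 = k + 1 from rfl, hf (k + 1), add_comm]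

/-- The images of `A n` and `B n` under the homomorphism killing `w` and `z` are positive
words in `x` and `y`, of word lengths `f(2n-2) + f(2n-1)` and `f(2n-1) + f(2n)`
respectively. -/
theorem A_B_images_positive_with_fib_lengths
    (f : ℕ → ℕ) (hf0 : f 0 = 1) (hf1 : f 1 = 1)
    (hf : ∀ m, f (m + 2) = f (m + 1) + f m)
    (x y w z : FreeGroup (Fin 4))
    (hx : x = FreeGroup.of 0) (hy : y = FreeGroup.of 1)
    (hw : w = FreeGroup.of 2) (hz : z = FreeGroup.of 3)
    (A B : ℕ → FreeGroup (Fin 4))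
    (hA1 : A 1 = y * w * z⁻¹ * x)
    (hB1 : B 1 = y ^ 2 * w * z⁻¹ * x)
    (hA : ∀ n ≥ 1, A (n + 1) = B n * A n)
    (hB : ∀ n ≥ 1, B (n + 1) = B n * B n * A n)
    (π : FreeGroup (Fin 4) →* FreeGroup (Fin 2))
    (hπx : π x = FreeGroup.of 0) (hπy : π y = FreeGroup.of 1)
    (hπw : π w = 1) (hπz : π z = 1) :
    ∀ n ≥ 1,
      π (A n) ∈ Submonoid.closure ({FreeGroup.of 0, FreeGroup.of 1} : Set (FreeGroup (Fin 2))) ∧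
      π (B n) ∈ Submonoid.closure ({FreeGroup.of 0, FreeGroup.of 1} : Set (FreeGroup (Fin 2))) ∧
      (FreeGroup.toWord (π (A n))).length = f (2 * n - 2) + f (2 * n - 1) ∧
      (FreeGroup.toWord (π (B n))).length = f (2 * n - 1) + f (2 * n) :=
  A_B_images_positive_with_fib_lengths_general f hf0 hf1 hf x y w z A B hA1 hB1 hA hB π hπx hπy hπw
    hπz
end
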